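/- arXiv:1411.7107 — 3 statements merged into one kernel-verified Lean document; each statement's English description precedes it below -/
import Mathlib

section
/- The Catalan simplicial set ℂ, defined as the nerve of the monoidal poset (2, ∨, ⊥) viewed as a one-object bicategory (equivalently, the nerve of the monoid ({⊥,⊤}, ∨, ⊥) viewed as a one-object category), has exactly Catalan(n+1) many n-simplices for each n ≥ 0; in particular it has 1 zero-simplex, 2 one-simplices, 5 two-simplices, and 14 three-simplices. -/
open Finset

/-- Staircase sequences: monotone `c : Fin m → ℕ` with `c j ≤ j`. -/
def SSeq (m : ℕ) : Type :=
  {c : Fin m → ℕ // (∀ j k : Fin m, j ≤ k → c j ≤ c k) ∧ ∀ j : Fin m, c j ≤ j.1}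

noncomputable instance (m : ℕ) : Fintype (SSeq m) :=
  Fintype.ofInjective
    (fun s : SSeq m => fun j : Fin m => (⟨s.1 j, lt_of_le_of_lt (s.2.2 j) j.isLt⟩ : Fin m))
    (by
      intro s t h
      apply Subtype.ext
      funext j
      have := congrFun h j
      simpa using congrArg Fin.val this)

/-- The gluing map realizing the first-return decomposition of staircase sequences. -/
def glue (n : ℕ) : (Σ i : Fin (n + 1), SSeq i.1 × SSeq (n - i.1)) → SSeq (n + 1) :=
  fun ⟨i, d, e⟩ =>
    ⟨fun j =>
      if h0 : j.1 = 0 then 0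
      else if h : j.1 ≤ i.1 then d.1 ⟨j.1 - 1, by omega⟩
      else e.1 ⟨j.1 - i.1 - 1, by have := j.isLt; omega⟩ + i.1 + 1,
     by
      constructor
      · intro j k hjk
        beta_reduce
        have hjk' : j.1 ≤ k.1 := hjk
        by_cases hj0 : j.1 = 0
        · rw [dif_pos hj0]
          exact Nat.zero_le _
        · by_cases hk0 : k.1 = 0
          · omega
          · rw [dif_neg hj0, dif_neg hk0]
            by_cases hji : j.1 ≤ i.1
            · by_cases hki : k.1 ≤ i.1
              · rw [dif_pos hji, dif_pos hki]
                exact d.2.1 _ _ (Fin.mk_le_mk.mpr (by omega))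
              · rw [dif_pos hji, dif_neg hki]
                have hd := d.2.2 ⟨j.1 - 1, by omega⟩
                simp only at hd
                omega
            · have hki : ¬ k.1 ≤ i.1 := by omega
              rw [dif_neg hji, dif_neg hki]
              have he := e.2.1 ⟨j.1 - i.1 - 1, by have := j.isLt; omega⟩
                ⟨k.1 - i.1 - 1, by have := k.isLt; omega⟩ (Fin.mk_le_mk.mpr (by omega))
              omega
      · intro j
        beta_reduce
        by_cases hj0 : j.1 = 0
        · rw [dif_pos hj0]
          exact Nat.zero_le _
        · rw [dif_neg hj0]
          by_cases hji : j.1 ≤ i.1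
          · rw [dif_pos hji]
            have hd := d.2.2 ⟨j.1 - 1, by omega⟩
            simp only at hd
            omega
          · rw [dif_neg hji]
            have he := e.2.2 ⟨j.1 - i.1 - 1, by have := j.isLt; omega⟩
            simp only at he
            have := j.isLt
            omega⟩

lemma glue_bijective (n : ℕ) : Function.Bijective (glue n) := by
  constructor
  · rintro ⟨i, d, e⟩ ⟨i', d', e'⟩ h
    have hfun : ∀ j : Fin (n + 1 + 0), (glue n ⟨i, d, e⟩).1 j = (glue n ⟨i', d', e'⟩).1 j := by
      intro j; rw [h]
    -- first show i = i'
    have key : ∀ (i₁ i₂ : Fin (n+1)) (d₁ : SSeq i₁.1) (e₁ : SSeq (n - i₁.1))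
        (d₂ : SSeq i₂.1) (e₂ : SSeq (n - i₂.1)),
        (∀ j : Fin (n+1), (glue n ⟨i₁, d₁, e₁⟩).1 j = (glue n ⟨i₂, d₂, e₂⟩).1 j) →
        ¬ i₁.1 < i₂.1 := by
      intro i₁ i₂ d₁ e₁ d₂ e₂ hf hlt
      have hj : i₁.1 + 1 < n + 1 := by have := i₂.isLt; omega
      have := hf ⟨i₁.1 + 1, hj⟩
      simp only [glue] at this
      have h1 : ¬ (i₁.1 + 1 = 0) := by omega
      have h2 : ¬ (i₁.1 + 1 ≤ i₁.1) := by omega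
      have h3 : (i₁.1 + 1 ≤ i₂.1) := by omega
      rw [dif_neg h1, dif_neg h2, dif_neg h1, dif_pos h3] at this
      have he := e₁.2.2 ⟨i₁.1 + 1 - i₁.1 - 1, by omega⟩
      have hd := d₂.2.2 ⟨i₁.1 + 1 - 1, by omega⟩
      simp only [Fin.val_mk] at he hd this
      omega
    have hii : i = i' := by
      have h1 := key i i' d e d' e' hfun
      have h2 := key i' i d' e' d e (fun j => (hfun j).symm)
      exact Fin.ext (by omega)
    subst hii
    -- now d = d' and e = e'
    have hd : d = d' := by
      apply Subtype.ext; funext m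
      have hm : m.1 + 1 < n + 1 := by have := m.isLt; have := i.isLt; omega
      have := hfun ⟨m.1 + 1, hm⟩
      simp only [glue] at this
      have h1 : ¬ (m.1 + 1 = 0) := by omega
      have h2 : (m.1 + 1 ≤ i.1) := by have := m.isLt; omega
      rw [dif_neg h1, dif_pos h2, dif_neg h1, dif_pos h2] at this
      simpa using this
    have he : e = e' := by
      apply Subtype.ext; funext m
      have hm : m.1 + i.1 + 1 < n + 1 := by have := m.isLt; omega
      have := hfun ⟨m.1 + i.1 + 1, hm⟩
      simp only [glue] at this
      have h1 : ¬ (m.1 + i.1 + 1 = 0) := by omega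
      have h2 : ¬ (m.1 + i.1 + 1 ≤ i.1) := by omega
      rw [dif_neg h1, dif_neg h2, dif_neg h1, dif_neg h2] at this
      have hm2 : m.1 + i.1 + 1 - i.1 - 1 < n - i.1 := by have := m.isLt; omega
      have h3 : e.1 ⟨m.1 + i.1 + 1 - i.1 - 1, hm2⟩ = e'.1 ⟨m.1 + i.1 + 1 - i.1 - 1, hm2⟩ := by
        omega
      have hmm : (⟨m.1 + i.1 + 1 - i.1 - 1, hm2⟩ : Fin (n - i.1)) = m :=
        Fin.ext (show m.1 + i.1 + 1 - i.1 - 1 = m.1 by omega)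
      rw [hmm] at h3
      exact h3
    rw [hd, he]
  · rintro ⟨c, hmono, hle⟩
    -- k : least index ≥ 1 which is a "return" (c k = k), or n+1
    have hex : ∃ j, 0 < j ∧ (j = n + 1 ∨ ∃ h : j < n + 1, c ⟨j, h⟩ = j) :=
      ⟨n + 1, Nat.succ_pos n, Or.inl rfl⟩
    set k := Nat.find hex with hk
    obtain ⟨hk0, hkspec⟩ := Nat.find_spec hex
    have hkmin : ∀ j, j < k → ¬ (0 < j ∧ (j = n + 1 ∨ ∃ h : j < n + 1, c ⟨j, h⟩ = j)) :=
      fun j hj => Nat.find_min hex hj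
    have hkle : k ≤ n + 1 := Nat.find_le ⟨Nat.succ_pos n, Or.inl rfl⟩
    have hck : ∀ h : k < n + 1, c ⟨k, h⟩ = k := by
      intro h
      rcases hkspec with h1 | ⟨h2, h3⟩
      · omega
      · exact h3
    have hclt : ∀ j (hj1 : 0 < j) (hj2 : j < k) (hlt : j < n + 1), c ⟨j, hlt⟩ < j := by
      intro j hj1 hj2 hlt
      have hmin := hkmin j hj2
      push_neg at hmin
      obtain ⟨-, h2⟩ := hmin hj1
      have hne : c ⟨j, hlt⟩ ≠ j := h2 hlt
      have hlej : c ⟨j, hlt⟩ ≤ j := hle ⟨j, hlt⟩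
      omega
    have hc0 : ∀ (h : (0:ℕ) < n + 1), c ⟨0, h⟩ = 0 := by
      intro h; have := hle ⟨0, h⟩; simpa using this
    refine ⟨⟨⟨k - 1, by omega⟩,
      ⟨fun m => c ⟨m.1 + 1, by have hm : m.1 < k - 1 := m.isLt; omega⟩, ?_, ?_⟩,
      ⟨fun m => c ⟨m.1 + k, by have hm : m.1 < n - (k - 1) := m.isLt; omega⟩ - k, ?_, ?_⟩⟩, ?_⟩
    · intro j₁ j₂ h12
      exact hmono _ _ (Fin.mk_le_mk.mpr (Nat.succ_le_succ h12))
    · intro m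
      have hm : m.1 < k - 1 := m.isLt
      exact Nat.lt_succ_iff.mp
        (hclt (m.1 + 1) (Nat.succ_pos _) (by omega) (by omega))
    · intro j₁ j₂ h12
      have h12' : j₁.1 ≤ j₂.1 := h12
      exact Nat.sub_le_sub_right
        (hmono ⟨j₁.1 + k, by have hm : j₁.1 < n - (k-1) := j₁.isLt; omega⟩
          ⟨j₂.1 + k, by have hm : j₂.1 < n - (k-1) := j₂.isLt; omega⟩
          (Fin.mk_le_mk.mpr (by omega))) k
    · intro m
      have hm : m.1 < n - (k - 1) := m.isLt
      exact tsub_le_iff_right.mpr (hle ⟨m.1 + k, by omega⟩)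
    · apply Subtype.ext
      funext j
      simp only [glue, Fin.val_mk]
      by_cases hj0 : j.1 = 0
      · rw [dif_pos hj0]
        have hj : j = ⟨0, by omega⟩ := Fin.ext hj0
        rw [hj]; exact (hc0 _).symm
      · rw [dif_neg hj0]
        by_cases hji : j.1 ≤ k - 1
        · rw [dif_pos hji]
          exact congrArg c (Fin.ext (show j.1 - 1 + 1 = j.1 by omega))
        · rw [dif_neg hji]
          have hjlt := j.isLt
          have hkn : k < n + 1 := by omega
          have hck' := hck hkn
          have hge : k ≤ c ⟨j.1 - (k - 1) - 1 + k, by omega⟩ := by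
            have h := hmono ⟨k, hkn⟩ ⟨j.1 - (k - 1) - 1 + k, by omega⟩
              (Fin.mk_le_mk.mpr (by omega))
            omega
          have hcj : c ⟨j.1 - (k - 1) - 1 + k, by omega⟩ = c j :=
            congrArg c (Fin.ext (show j.1 - (k - 1) - 1 + k = j.1 by omega))
          omega

lemma sseq_zero_card : Fintype.card (SSeq 0) = 1 := by
  rw [Fintype.card_eq_one_iff]
  refine ⟨⟨fun j => j.elim0, fun j => j.elim0, fun j => j.elim0⟩, ?_⟩
  intro s
  apply Subtype.ext
  funext j
  exact j.elim0

lemma sseq_card (m : ℕ) : Fintype.card (SSeq m) = catalan m := by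
  induction m using Nat.strong_induction_on with
  | _ m ih =>
    match m with
    | 0 => simpa using sseq_zero_card
    | n + 1 =>
      have hbij := glue_bijective n
      have := (Fintype.card_of_bijective hbij).symm
      rw [this, Fintype.card_sigma]
      rw [catalan_succ]
      apply Finset.sum_congr rfl
      intro i _
      rw [Fintype.card_prod, ih i.1 (by have := i.isLt; omega),
        ih (n - i.1) (by omega)]

/-- Index set of the triangle `{(i,j) : 0 ≤ i ≤ j ≤ n}`. -/
def TriIdx (n : ℕ) : Type := {p : Fin (n + 1) × Fin (n + 1) // p.1 ≤ p.2}

section Tri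

open scoped Classical

variable {n : ℕ}

/-- From a labelling of the triangle, the column-count staircase sequence. -/
noncomputable def toSSeq (a : TriIdx n → Bool) : Fin (n + 1) → ℕ :=
  fun j => (univ.filter (fun i : Fin (n + 1) => ∃ h : i ≤ j, a ⟨(i, j), h⟩ = true)).card

end Tri

/-- The `n`-simplices of the Catalan simplicial set `ℂ` (the nerve of the monoidal
poset `(2, ∨, ⊥)`): monotone `{0,1}`-labellings of the triangle vanishing on the
diagonal.  There are exactly `catalan (n+1)` of them; in particular `1, 2, 5, 14`
simplices in dimensions `0, 1, 2, 3`. -/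
theorem catalan_simplicial_set_card (n : ℕ) :
    Nat.card {a : TriIdx n → Bool //
      (∀ i : Fin (n + 1), a ⟨(i, i), le_refl i⟩ = false) ∧
      (∀ p q : TriIdx n, q.1.1 ≤ p.1.1 → p.1.2 ≤ q.1.2 → a p ≤ a q)} =
      catalan (n + 1) := by
  classical
  set X := {a : TriIdx n → Bool //
      (∀ i : Fin (n + 1), a ⟨(i, i), le_refl i⟩ = false) ∧
      (∀ p q : TriIdx n, q.1.1 ≤ p.1.1 → p.1.2 ≤ q.1.2 → a p ≤ a q)} with hX
  -- the map X → SSeq (n+1)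
  have hdiag : ∀ (a : X) (j : Fin (n+1)) (i : Fin (n+1)),
      (∃ h : i ≤ j, a.1 ⟨(i, j), h⟩ = true) → i < j := by
    rintro a j i ⟨h, ha⟩
    rcases lt_or_eq_of_le h with h' | h'
    · exact h'
    · subst h'
      rw [a.2.1 i] at ha
      exact absurd ha (by simp)
  have hseg : ∀ (a : X) (i j : Fin (n+1)) (h : i ≤ j),
      (a.1 ⟨(i, j), h⟩ = true ↔ i.1 < toSSeq a.1 j) := by
    intro a i j h
    constructor
    · intro ha
      have hsub : Finset.Iic i ⊆
          univ.filter (fun i' : Fin (n + 1) => ∃ h : i' ≤ j, a.1 ⟨(i', j), h⟩ = true) := by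
        intro i' hi'
        simp only [Finset.mem_Iic] at hi'
        simp only [Finset.mem_filter, Finset.mem_univ, true_and]
        refine ⟨le_trans hi' h, ?_⟩
        have := a.2.2 ⟨(i, j), h⟩ ⟨(i', j), le_trans hi' h⟩ hi' (le_refl _)
        rw [Bool.le_iff_imp] at this
        exact this ha
      have := Finset.card_le_card hsub
      rw [Fin.card_Iic] at this
      unfold toSSeq
      omega
    · intro hlt
      by_contra ha
      have hfalse : a.1 ⟨(i, j), h⟩ = false := by
        cases hab : a.1 ⟨(i, j), h⟩
        · rfl
        · exact absurd hab ha
      have hsub : univ.filter (fun i' : Fin (n + 1) => ∃ h : i' ≤ j, a.1 ⟨(i', j), h⟩ = true)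
          ⊆ Finset.Iio i := by
        intro i' hi'
        simp only [Finset.mem_filter, Finset.mem_univ, true_and] at hi'
        obtain ⟨h', ha'⟩ := hi'
        simp only [Finset.mem_Iio]
        by_contra hcon
        push_neg at hcon
        have := a.2.2 ⟨(i', j), h'⟩ ⟨(i, j), h⟩ hcon (le_refl _)
        rw [Bool.le_iff_imp] at this
        have := this ha'
        rw [hfalse] at this
        exact absurd this (by simp)
      have := Finset.card_le_card hsub
      rw [Fin.card_Iio] at this
      unfold toSSeq at hlt
      omega
  have hmem : ∀ a : X, (∀ j k : Fin (n+1), j ≤ k → toSSeq a.1 j ≤ toSSeq a.1 k) ∧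
      ∀ j : Fin (n+1), toSSeq a.1 j ≤ j.1 := by
    intro a
    constructor
    · intro j k hjk
      apply Finset.card_le_card
      intro i hi
      simp only [Finset.mem_filter, Finset.mem_univ, true_and] at hi ⊢
      obtain ⟨h, ha⟩ := hi
      refine ⟨le_trans h hjk, ?_⟩
      have := a.2.2 ⟨(i, j), h⟩ ⟨(i, k), le_trans h hjk⟩ (le_refl _) hjk
      rw [Bool.le_iff_imp] at this
      exact this ha
    · intro j
      have hsub : univ.filter (fun i : Fin (n + 1) => ∃ h : i ≤ j, a.1 ⟨(i, j), h⟩ = true)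
          ⊆ Finset.Iio j := by
        intro i hi
        simp only [Finset.mem_filter, Finset.mem_univ, true_and] at hi
        simpa using hdiag a j i hi
      have := Finset.card_le_card hsub
      rw [Fin.card_Iio] at this
      exact this
  let F : X → SSeq (n + 1) := fun a => ⟨toSSeq a.1, hmem a⟩
  have hFbij : Function.Bijective F := by
    constructor
    · intro a b hab
      apply Subtype.ext
      funext p
      obtain ⟨⟨i, j⟩, h⟩ := p
      have h1 := hseg a i j h
      have h2 := hseg b i j h
      have : toSSeq a.1 j = toSSeq b.1 j := by
        have := congrArg Subtype.val hab
        exact congrFun this j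
      rw [Bool.eq_iff_iff, h1, h2, this]
    · rintro ⟨c, hcm, hcl⟩
      refine ⟨⟨fun p => decide (p.1.1.1 < c p.1.2), ?_, ?_⟩, ?_⟩
      · intro i
        simp only [decide_eq_false_iff_not, not_lt]
        exact hcl i
      · intro p q h1 h2
        rw [Bool.le_iff_imp]
        simp only [decide_eq_true_iff]
        intro hp
        calc q.1.1.1 ≤ p.1.1.1 := h1
          _ < c p.1.2 := hp
          _ ≤ c q.1.2 := hcm _ _ h2
      · apply Subtype.ext
        funext j
        show toSSeq _ j = c j
        unfold toSSeq
        have hfe : univ.filter (fun i : Fin (n + 1) =>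
            ∃ h : i ≤ j, decide (i.1 < c j) = true) =
            Finset.Iio (⟨c j, by have := hcl j; have := j.isLt; omega⟩ : Fin (n+1)) := by
          ext i
          simp only [Finset.mem_filter, Finset.mem_univ, true_and, Finset.mem_Iio,
            decide_eq_true_iff, Fin.lt_def]
          constructor
          · rintro ⟨_, h⟩; exact h
          · intro h
            have := hcl j
            exact ⟨by rw [Fin.le_def]; omega, h⟩
        rw [hfe, Fin.card_Iio]
  rw [Nat.card_congr (Equiv.ofBijective F hFbij), Nat.card_eq_fintype_card, sseq_card]
end

section
/- There exist skew-monoidal categories in which the composite ρ_I ∘ λ_I : I ⊗ I → I ⊗ I is not the identity. -/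
open CategoryTheory

/-- A skew-monoidal category structure on a category `C`: a tensor product functor
(given by its action on objects and morphisms), a unit object, and natural (not
necessarily invertible) associativity and unit constraints `α`, `λ`, `ρ`,
satisfying the five skew-monoidal axioms. -/
structure SkewMonoidal (C : Type*) [CategoryTheory.Category C] where
  /-- tensor product on objects -/
  tensor : C → C → C
  /-- tensor product on morphisms -/
  tHom : {X₁ Y₁ X₂ Y₂ : C} → (X₁ ⟶ Y₁) → (X₂ ⟶ Y₂) → (tensor X₁ X₂ ⟶ tensor Y₁ Y₂)
  tHom_id : ∀ X Y : C, tHom (𝟙 X) (𝟙 Y) = 𝟙 (tensor X Y)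
  tHom_comp : ∀ {X₁ Y₁ Z₁ X₂ Y₂ Z₂ : C} (f₁ : X₁ ⟶ Y₁) (g₁ : Y₁ ⟶ Z₁)
    (f₂ : X₂ ⟶ Y₂) (g₂ : Y₂ ⟶ Z₂),
    tHom (f₁ ≫ g₁) (f₂ ≫ g₂) = tHom f₁ f₂ ≫ tHom g₁ g₂
  /-- unit object -/
  unit : C
  /-- associativity constraint `α_{X,Y,Z} : (X ⊗ Y) ⊗ Z ⟶ X ⊗ (Y ⊗ Z)` -/
  assoc : ∀ X Y Z : C, tensor (tensor X Y) Z ⟶ tensor X (tensor Y Z)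
  assoc_natural : ∀ {X₁ Y₁ X₂ Y₂ X₃ Y₃ : C} (f₁ : X₁ ⟶ Y₁) (f₂ : X₂ ⟶ Y₂) (f₃ : X₃ ⟶ Y₃),
    tHom (tHom f₁ f₂) f₃ ≫ assoc Y₁ Y₂ Y₃ = assoc X₁ X₂ X₃ ≫ tHom f₁ (tHom f₂ f₃)
  /-- left unit constraint `λ_X : I ⊗ X ⟶ X` -/
  lUnit : ∀ X : C, tensor unit X ⟶ X
  lUnit_natural : ∀ {X Y : C} (f : X ⟶ Y), tHom (𝟙 unit) f ≫ lUnit Y = lUnit X ≫ f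
  /-- right unit constraint `ρ_X : X ⟶ X ⊗ I` -/
  rUnit : ∀ X : C, X ⟶ tensor X unit
  rUnit_natural : ∀ {X Y : C} (f : X ⟶ Y), f ≫ rUnit Y = rUnit X ≫ tHom f (𝟙 unit)
  /-- axiom (1): the pentagon -/
  pentagon : ∀ W X Y Z : C,
    assoc (tensor W X) Y Z ≫ assoc W X (tensor Y Z) =
      tHom (assoc W X Y) (𝟙 Z) ≫ assoc W (tensor X Y) Z ≫ tHom (𝟙 W) (assoc X Y Z)
  /-- axiom (2): `(X ⊗ λ_Y) ∘ α_{X,I,Y} ∘ (ρ_X ⊗ Y) = id` -/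
  left_skew : ∀ X Y : C,
    tHom (rUnit X) (𝟙 Y) ≫ assoc X unit Y ≫ tHom (𝟙 X) (lUnit Y) = 𝟙 (tensor X Y)
  /-- axiom (3): `λ_{X⊗Y} ∘ α_{I,X,Y} = λ_X ⊗ Y` -/
  lUnit_assoc : ∀ X Y : C,
    assoc unit X Y ≫ lUnit (tensor X Y) = tHom (lUnit X) (𝟙 Y)
  /-- axiom (4): `α_{X,Y,I} ∘ ρ_{X⊗Y} = X ⊗ ρ_Y` -/
  rUnit_assoc : ∀ X Y : C,
    rUnit (tensor X Y) ≫ assoc X Y unit = tHom (𝟙 X) (rUnit Y)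
  /-- axiom (5): `λ_I ∘ ρ_I = id_I` -/
  unit_skew : rUnit unit ≫ lUnit unit = 𝟙 unit

/-- A category equipped with a skew-monoidal structure. -/
structure SkewMonCat where
  /-- the underlying category -/
  C : Type
  [inst : Category C]
  /-- the skew-monoidal structure -/
  S : SkewMonoidal C

attribute [instance] SkewMonCat.inst

abbrev SkOb := ℕ

instance SkObCat : Category.{v} SkOb where
  Hom m n := ULift.{v} {f : Fin (m+1) → Fin (n+1) // f 0 = 0}
  id m := ⟨⟨id, rfl⟩⟩
  comp f g := ⟨⟨g.down.1 ∘ f.down.1, by simp [Function.comp, f.down.2, g.down.2]⟩⟩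

theorem SkOb.hom_ext {m n : SkOb} {f g : m ⟶ n}
    (h : ∀ i, (f.down.1 i).1 = (g.down.1 i).1) : f = g :=
  congrArg ULift.up (Subtype.ext (funext fun i => Fin.ext (h i)))

theorem SkOb.comp_val {m n p : SkOb} (f : m ⟶ n) (g : n ⟶ p) (i : Fin (m+1)) :
    (f ≫ g).down.1 i = g.down.1 (f.down.1 i) := rfl

theorem SkOb.id_val {m : SkOb} (i : Fin (m+1)) : (𝟙 m : m ⟶ m).down.1 i = i := rfl

theorem SkOb.pt_val {m n : SkOb} (f : m ⟶ n) (h : 0 < m + 1) :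
    ((f.down.1 ⟨0, h⟩ : Fin (n+1)) : ℕ) = 0 := by
  have e : (⟨0, h⟩ : Fin (m+1)) = 0 := rfl
  rw [e, f.down.2]
  simp

def skTens (m n : SkOb) : SkOb := m + n + 1

theorem skTens_def (m n : ℕ) : skTens m n = m + n + 1 := rfl

def skTHom {X₁ Y₁ X₂ Y₂ : SkOb} (f : X₁ ⟶ Y₁) (g : X₂ ⟶ Y₂) :
    skTens X₁ X₂ ⟶ skTens Y₁ Y₂ :=
  ⟨⟨fun i => if h : (i : ℕ) < X₁ + 1 then
      ⟨(f.down.1 ⟨i, h⟩ : ℕ), by have := (f.down.1 ⟨i, h⟩).2; simp only [skTens_def]; omega⟩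
    else
      ⟨(g.down.1 ⟨(i : ℕ) - (X₁+1), by have := i.2; simp only [skTens_def] at this; omega⟩ : ℕ) + (Y₁+1),
        by have := (g.down.1 ⟨(i : ℕ) - (X₁+1), by have := i.2; simp only [skTens_def] at this; omega⟩).2
           simp only [skTens_def]; omega⟩,
   by apply Fin.ext
      dsimp only
      rw [dif_pos (by simp : ((0 : Fin (skTens X₁ X₂ + 1)) : ℕ) < X₁ + 1)]
      simp only [Fin.val_zero]
      exact SkOb.pt_val f _⟩⟩

theorem skTHom_val {X₁ Y₁ X₂ Y₂ : SkOb} (f : X₁ ⟶ Y₁) (g : X₂ ⟶ Y₂)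
    (i : Fin (skTens X₁ X₂ + 1)) :
    ((skTHom f g).down.1 i : ℕ) =
      if h : (i : ℕ) < X₁ + 1 then (f.down.1 ⟨i, h⟩ : ℕ)
      else (g.down.1 ⟨(i : ℕ) - (X₁+1), by have := i.2; simp only [skTens_def] at this; omega⟩ : ℕ) + (Y₁+1) := by
  unfold skTHom
  dsimp only
  split_ifs with h <;> rfl

def skAssoc (X Y Z : SkOb) : skTens (skTens X Y) Z ⟶ skTens X (skTens Y Z) :=
  ⟨⟨fun i => ⟨i, by have := i.2; simp only [skTens_def] at *; omega⟩, rfl⟩⟩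

def skL (X : SkOb) : skTens 0 X ⟶ X :=
  ⟨⟨fun i => ⟨(i : ℕ) - 1, by have := i.2; simp only [skTens_def] at this; omega⟩, rfl⟩⟩

def skR (X : SkOb) : X ⟶ skTens X 0 :=
  ⟨⟨fun i => ⟨i, by have := i.2; simp only [skTens_def]; omega⟩, rfl⟩⟩


theorem skL_val (X : SkOb) (i : Fin (skTens 0 X + 1)) : ((skL X).down.1 i : ℕ) = (i : ℕ) - 1 := rfl
theorem skR_val (X : SkOb) (i : Fin (X + 1)) : ((skR X).down.1 i : ℕ) = (i : ℕ) := rfl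
theorem skAssoc_val (X Y Z : SkOb) (i : Fin (skTens (skTens X Y) Z + 1)) :
    ((skAssoc X Y Z).down.1 i : ℕ) = (i : ℕ) := rfl

def skSM : SkewMonoidal SkOb where
  tensor := skTens
  tHom := skTHom
  tHom_id := by
    intro X Y
    apply SkOb.hom_ext; intro i
    simp only [skTHom_val, SkOb.id_val]
    split_ifs with h
    · simp [SkOb.id_val]
    · omega
  tHom_comp := by
    intro X₁ Y₁ Z₁ X₂ Y₂ Z₂ f₁ g₁ f₂ g₂
    apply SkOb.hom_ext; intro i
    simp only [SkOb.comp_val, skTHom_val]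
    split_ifs with h h2 <;> first | rfl | omega |
      (congr 2; apply Fin.ext; simp)
  unit := 0
  assoc := skAssoc
  assoc_natural := by
    intro X₁ Y₁ X₂ Y₂ X₃ Y₃ f₁ f₂ f₃
    apply SkOb.hom_ext; intro i
    simp only [SkOb.comp_val, skTHom_val, SkOb.id_val, skL_val, skR_val, skAssoc_val]
    simp only [SkOb.comp_val, skTHom_val, skAssoc_val, skAssoc, skTens_def]
    split_ifs <;> first | rfl | omega | (simp only [Nat.sub_sub]; ring_nf)
  lUnit := skL
  lUnit_natural := by
    intro X Y f
    apply SkOb.hom_ext; intro i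
    simp only [SkOb.comp_val, skTHom_val, SkOb.id_val, skL_val, skR_val, skAssoc_val]
    simp only [SkOb.comp_val, skTHom_val, SkOb.id_val, skL, skR, skAssoc, skTens_def, Nat.zero_add]
    split_ifs with h
    · have h0 : (i:ℕ) = 0 := by omega
      simp only [h0, Nat.zero_sub]
      exact (SkOb.pt_val f _).symm
    · omega
  rUnit := skR
  rUnit_natural := by
    intro X Y f
    apply SkOb.hom_ext; intro i
    simp only [SkOb.comp_val, skTHom_val, SkOb.id_val, skL_val, skR_val, skAssoc_val]
    simp
    intro h; omega
  pentagon := by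
    intro W X Y Z
    apply SkOb.hom_ext; intro i
    simp only [SkOb.comp_val, skTHom_val, SkOb.id_val, skL_val, skR_val, skAssoc_val]
    simp only [skTens_def]
    split_ifs with h1 <;> simp only [h1, dite_true, dite_false, ↓reduceDIte] <;> split_ifs <;> omega
  left_skew := by
    intro X Y
    apply SkOb.hom_ext; intro i
    simp only [SkOb.comp_val, skTHom_val, SkOb.id_val, skL_val, skR_val, skAssoc_val]
    simp only [SkOb.comp_val, skTHom_val, SkOb.id_val, skL, skR, skAssoc, skTens_def, Nat.zero_add]
    split_ifs <;> first | rfl | omega | (simp only [Nat.sub_sub]; ring_nf)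
  lUnit_assoc := by
    intro X Y
    apply SkOb.hom_ext; intro i
    simp only [SkOb.comp_val, skTHom_val, SkOb.id_val, skL_val, skR_val, skAssoc_val]
    simp only [SkOb.comp_val, skTHom_val, SkOb.id_val, skL, skR, skAssoc, skTens_def, Nat.zero_add]
    split_ifs <;> first | rfl | omega | (simp only [Nat.sub_sub]; ring_nf)
  rUnit_assoc := by
    intro X Y
    apply SkOb.hom_ext; intro i
    simp only [SkOb.comp_val, skTHom_val, SkOb.id_val, skL_val, skR_val, skAssoc_val]
    simp only [SkOb.comp_val, skTHom_val, SkOb.id_val, skL, skR, skAssoc, skTens_def, Nat.zero_add]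
    split_ifs <;> first | rfl | omega | (simp only [Nat.sub_sub]; ring_nf)
  unit_skew := by
    apply SkOb.hom_ext; intro i
    simp only [SkOb.comp_val, skTHom_val, SkOb.id_val, skL, skR, skAssoc, skTens_def, Nat.zero_add]
    have := i.2
    omega

/-- There exist skew-monoidal categories in which the composite
`ρ_I ∘ λ_I : I ⊗ I → I ⊗ I` is not the identity. -/
theorem exists_skewMonoidal_lambda_comp_rho_ne_id :
    ∃ X : SkewMonCat,
      X.S.lUnit X.S.unit ≫ X.S.rUnit X.S.unit ≠ 𝟙 (X.S.tensor X.S.unit X.S.unit) := by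
  refine ⟨@SkewMonCat.mk SkOb SkObCat skSM, fun h => ?_⟩
  have h2 := congrArg
    (fun g : skTens 0 0 ⟶ skTens 0 0 => ((g.down.1 ⟨1, by simp [skTens_def]⟩ : Fin (skTens 0 0 + 1)) : ℕ)) h
  simp only [SkOb.comp_val, SkOb.id_val, skL, skR, skSM] at h2
  omega
end

section
/- The Catalan simplicial set ℂ has exactly nine non-degenerate 4-simplices. -/
namespace CatalanSSet

/-- A 2-simplex of the Catalan simplicial set, encoded by its triple of faces
`(d₀, d₁, d₂)` (with `false` the degenerate edge `s₀⋆` and `true` the edge `c`). -/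
abbrev Tri := Bool × Bool × Bool

/-- The face `d_k` of a 2-simplex. -/
def dTri (t : Tri) : Fin 3 → Bool := ![t.1, t.2.1, t.2.2]

/-- The triples which are 2-simplices of `ℂ`: `d₀ ∨ d₂ ≤ d₁` (five of them). -/
def IsTri (t : Tri) : Prop := (t.1 || t.2.2) ≤ t.2.1

/-- The degeneracy `s₀` of an edge, as a 2-simplex. -/
def se0 (e : Bool) : Tri := (e, e, false)

/-- The degeneracy `s₁` of an edge, as a 2-simplex. -/
def se1 (e : Bool) : Tri := (false, e, e)

/-- By 2-coskeletality, a 3-simplex of `ℂ` is a 4-tuple `(x₀,x₁,x₂,x₃)` of 2-simplices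
satisfying `d_j (x_i) = d_i (x_{j+1})` for `0 ≤ i ≤ j < 3`. -/
def IsSimp3 (x : Fin 4 → Tri) : Prop :=
  (∀ i : Fin 4, IsTri (x i)) ∧
    ∀ i j : Fin 3, i ≤ j → dTri (x (Fin.castSucc i)) j = dTri (x j.succ) i

/-- The degeneracy `s₀` of a 2-simplex, as a 3-simplex (recorded by its face tuple). -/
def s0T (t : Tri) : Fin 4 → Tri := ![t, t, se0 t.2.1, se0 t.2.2]

/-- The degeneracy `s₁` of a 2-simplex, as a 3-simplex. -/
def s1T (t : Tri) : Fin 4 → Tri := ![se0 t.1, t, t, se1 t.2.2]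

/-- The degeneracy `s₂` of a 2-simplex, as a 3-simplex. -/
def s2T (t : Tri) : Fin 4 → Tri := ![se1 t.1, se1 t.2.1, t, t]

/-- A 3-simplex is degenerate when it is the image of a 2-simplex under a degeneracy. -/
def Degenerate3 (x : Fin 4 → Tri) : Prop :=
  ∃ t : Tri, IsTri t ∧ (x = s0T t ∨ x = s1T t ∨ x = s2T t)

/-- The 2-simplex `t`, with all faces `c`. -/
def tT : Tri := (true, true, true)

/-- The 2-simplex `i`, with faces `(s₀⋆, c, s₀⋆)`. -/
def iT : Tri := (false, true, false)

/-- The non-degenerate 3-simplex `a = (t,t,t,t)`. -/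
def aS : Fin 4 → Tri := ![tT, tT, tT, tT]

/-- The non-degenerate 3-simplex `ℓ = (i, s₁c, t, s₁c)`. -/
def lS : Fin 4 → Tri := ![iT, se1 true, tT, se1 true]

/-- The non-degenerate 3-simplex `r = (s₀c, t, s₀c, i)`. -/
def rS : Fin 4 → Tri := ![se0 true, tT, se0 true, iT]

/-- The non-degenerate 3-simplex `k = (i, s₁c, s₀c, i)`. -/
def kS : Fin 4 → Tri := ![iT, se1 true, se0 true, iT]

end CatalanSSet

namespace CatalanSSet

/-- By 2-coskeletality, a 4-simplex of `ℂ` is a 5-tuple `(y₀,…,y₄)` of 3-simplices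
satisfying `d_j (y_i) = d_i (y_{j+1})` for `0 ≤ i ≤ j < 4`, where the face `d_k` of a
3-simplex (identified with its face 4-tuple) is its `k`-th component. -/
def IsSimp4 (y : Fin 5 → Fin 4 → Tri) : Prop :=
  (∀ i : Fin 5, IsSimp3 (y i)) ∧
    ∀ i j : Fin 4, i ≤ j → y (Fin.castSucc i) j = y j.succ i

/-- The degeneracy `s₀` of a 3-simplex, as a 4-simplex (recorded by its face tuple). -/
def s0F (x : Fin 4 → Tri) : Fin 5 → Fin 4 → Tri :=
  ![x, x, s0T (x 1), s0T (x 2), s0T (x 3)]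

/-- The degeneracy `s₁` of a 3-simplex, as a 4-simplex. -/
def s1F (x : Fin 4 → Tri) : Fin 5 → Fin 4 → Tri :=
  ![s0T (x 0), x, x, s1T (x 2), s1T (x 3)]

/-- The degeneracy `s₂` of a 3-simplex, as a 4-simplex. -/
def s2F (x : Fin 4 → Tri) : Fin 5 → Fin 4 → Tri :=
  ![s1T (x 0), s1T (x 1), x, x, s2T (x 3)]

/-- The degeneracy `s₃` of a 3-simplex, as a 4-simplex. -/
def s3F (x : Fin 4 → Tri) : Fin 5 → Fin 4 → Tri :=
  ![s2T (x 0), s2T (x 1), s2T (x 2), x, x]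

/-- A 4-simplex is degenerate when it is the image of a 3-simplex under a degeneracy. -/
def Degenerate4 (y : Fin 5 → Fin 4 → Tri) : Prop :=
  ∃ x : Fin 4 → Tri, IsSimp3 x ∧ (y = s0F x ∨ y = s1F x ∨ y = s2F x ∨ y = s3F x)

end CatalanSSet

namespace CatalanSSet

instance : DecidablePred IsTri := fun t => by unfold IsTri; infer_instance
instance : DecidablePred IsSimp3 := fun x => by unfold IsSimp3; infer_instance
instance : DecidablePred IsSimp4 := fun y => by unfold IsSimp4; infer_instance

/-- Table of all fourteen 3-simplices of `ℂ`. -/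
def L3 : Fin 14 → Fin 4 → Tri := ![
  ![(false, false, false), (false, false, false), (false, false, false), (false, false, false)],
  ![(false, false, false), (false, true, false), (false, true, false), (false, false, false)],
  ![(false, false, false), (false, true, true), (false, true, false), (false, true, false)],
  ![(false, false, false), (false, true, true), (false, true, true), (false, true, true)],
  ![(false, true, false), (false, true, false), (true, true, false), (false, false, false)],
  ![(false, true, false), (false, true, true), (true, true, false), (false, true, false)],
  ![(false, true, false), (false, true, true), (true, true, true), (false, true, true)],
  ![(false, true, true), (false, true, true), (true, true, false), (true, true, false)],
  ![(false, true, true), (false, true, true), (true, true, true), (true, true, true)],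
  ![(true, true, false), (true, true, false), (true, true, false), (false, false, false)],
  ![(true, true, false), (true, true, true), (true, true, false), (false, true, false)],
  ![(true, true, false), (true, true, true), (true, true, true), (false, true, true)],
  ![(true, true, true), (true, true, true), (true, true, false), (true, true, false)],
  ![(true, true, true), (true, true, true), (true, true, true), (true, true, true)]]


set_option maxRecDepth 100000 in
lemma mem3' : ∀ a b c d : Tri, IsSimp3 ![a,b,c,d] → ∃ k, ![a,b,c,d] = L3 k := by decide +kernel

lemma mem3 {x : Fin 4 → Tri} (hx : IsSimp3 x) : ∃ k, x = L3 k := by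
  have h : x = ![x 0, x 1, x 2, x 3] := by funext i; fin_cases i <;> rfl
  rw [h] at hx ⊢
  exact mem3' _ _ _ _ hx

set_option maxRecDepth 100000 in
lemma L3_inj : Function.Injective L3 := by decide +kernel

/-- Reconstruction of a 4-simplex from its first three faces. -/
def G3 (x0 x1 x2 : Fin 4 → Tri) : Fin 5 → Fin 4 → Tri :=
  ![x0, x1, x2,
    ![x0 2, x1 2, x2 2, ((x0 2).2.2, (x1 2).2.2, (x2 2).2.2)],
    ![x0 3, x1 3, x2 3, ((x0 2).2.2, (x1 2).2.2, (x2 2).2.2)]]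

/-- A cheap-to-check form of degeneracy. -/
def Cheap (y : Fin 5 → Fin 4 → Tri) : Prop :=
  y = s0F (y 0) ∨ y = s1F (y 1) ∨ y = s2F (y 2) ∨ y = s3F (y 3)

instance : DecidablePred Cheap := fun y => by unfold Cheap; infer_instance

lemma deg4_iff {y : Fin 5 → Fin 4 → Tri} (hy : IsSimp4 y) :
    Degenerate4 y ↔ Cheap y := by
  constructor
  · rintro ⟨x, hx, h | h | h | h⟩ <;> subst h
    · exact Or.inl rfl
    · exact Or.inr (Or.inl rfl)
    · exact Or.inr (Or.inr (Or.inl rfl))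
    · exact Or.inr (Or.inr (Or.inr rfl))
  · rintro (h | h | h | h)
    · exact ⟨y 0, hy.1 0, Or.inl h⟩
    · exact ⟨y 1, hy.1 1, Or.inr (Or.inl h)⟩
    · exact ⟨y 2, hy.1 2, Or.inr (Or.inr (Or.inl h))⟩
    · exact ⟨y 3, hy.1 3, Or.inr (Or.inr (Or.inr h))⟩

lemma recon {y : Fin 5 → Fin 4 → Tri} (hy : IsSimp4 y) :
    y = G3 (y 0) (y 1) (y 2) := by
  obtain ⟨h1, h2⟩ := hy
  have e02 : y 0 2 = y 3 0 := h2 0 2 (by decide)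
  have e12 : y 1 2 = y 3 1 := h2 1 2 (by decide)
  have e22 : y 2 2 = y 3 2 := h2 2 2 (by decide)
  have e03 : y 0 3 = y 4 0 := h2 0 3 (by decide)
  have e13 : y 1 3 = y 4 1 := h2 1 3 (by decide)
  have e23 : y 2 3 = y 4 2 := h2 2 3 (by decide)
  have e33 : y 3 3 = y 4 3 := h2 3 3 (by decide)
  have c0 : (y 3 0).2.2 = (y 3 3).1 := (h1 3).2 0 2 (by decide)
  have c1 : (y 3 1).2.2 = (y 3 3).2.1 := (h1 3).2 1 2 (by decide)
  have c2 : (y 3 2).2.2 = (y 3 3).2.2 := (h1 3).2 2 2 (by decide)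
  have h33 : y 3 3 = ((y 0 2).2.2, (y 1 2).2.2, (y 2 2).2.2) := by
    rw [e02, e12, e22, c0, c1, c2]
  funext i j
  fin_cases i
  · rfl
  · rfl
  · rfl
  · fin_cases j
    · exact e02.symm
    · exact e12.symm
    · exact e22.symm
    · exact h33
  · fin_cases j
    · exact e03.symm
    · exact e13.symm
    · exact e23.symm
    · exact e33.symm.trans h33

/-- The predicate picking out non-degenerate 4-simplices in terms of indices of the
first three faces (with redundant fail-fast compatibility prefilters). -/
def Q (q : Fin 14 × Fin 14 × Fin 14) : Prop :=
  L3 q.1 0 = L3 q.2.1 0 ∧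
    ((L3 q.1 1 = L3 q.2.2 0 ∧ L3 q.2.1 1 = L3 q.2.2 1) ∧
      (IsSimp4 (G3 (L3 q.1) (L3 q.2.1) (L3 q.2.2)) ∧
        ¬ Cheap (G3 (L3 q.1) (L3 q.2.1) (L3 q.2.2))))

instance : DecidablePred Q := fun q => by unfold Q; infer_instance

set_option maxRecDepth 1000000 in
lemma cardQ' :
    (∑ a : Fin 14, ∑ b : Fin 14, ∑ c : Fin 14, if Q (a, b, c) then 1 else 0) = 9 := by
  decide +kernel

lemma cardQ : Nat.card {q // Q q} = 9 := by
  rw [Nat.card_eq_fintype_card, Fintype.card_subtype, Finset.card_filter]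
  rw [Fintype.sum_prod_type]
  simp only [Fintype.sum_prod_type]
  exact cardQ'

/-- The bijection realizing each admissible index triple as a non-degenerate 4-simplex. -/
def F (q : {q // Q q}) : {y : Fin 5 → Fin 4 → Tri // IsSimp4 y ∧ ¬ Degenerate4 y} :=
  ⟨G3 (L3 q.1.1) (L3 q.1.2.1) (L3 q.1.2.2), q.2.2.2.1,
    fun hd => q.2.2.2.2 ((deg4_iff q.2.2.2.1).1 hd)⟩

end CatalanSSet

open CatalanSSet

/-- The Catalan simplicial set has exactly nine non-degenerate 4-simplices. -/
theorem catalan_nondegenerate_four_simplices :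
    Nat.card {y : Fin 5 → Fin 4 → Tri // IsSimp4 y ∧ ¬ Degenerate4 y} = 9 := by
  have hbij : Function.Bijective F := by
    constructor
    · rintro ⟨⟨a, b, c⟩, hq⟩ ⟨⟨a', b', c'⟩, hq'⟩ h
      have h' : G3 (L3 a) (L3 b) (L3 c) = G3 (L3 a') (L3 b') (L3 c') :=
        congrArg Subtype.val h
      have h0 : L3 a = L3 a' := congrFun h' 0
      have h1 : L3 b = L3 b' := congrFun h' 1
      have h2 : L3 c = L3 c' := congrFun h' 2
      simp only [Subtype.mk.injEq, Prod.mk.injEq]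
      exact ⟨L3_inj h0, L3_inj h1, L3_inj h2⟩
    · rintro ⟨y, hy, hnd⟩
      obtain ⟨k0, h0⟩ := mem3 (hy.1 0)
      obtain ⟨k1, h1⟩ := mem3 (hy.1 1)
      obtain ⟨k2, h2⟩ := mem3 (hy.1 2)
      have hg : G3 (L3 k0) (L3 k1) (L3 k2) = y := by
        rw [← h0, ← h1, ← h2]; exact (recon hy).symm
      have hk0 : L3 k0 = y 0 := h0.symm
      have hk1 : L3 k1 = y 1 := h1.symm
      have hk2 : L3 k2 = y 2 := h2.symm
      refine ⟨⟨(k0, k1, k2), ?_, ⟨?_, ?_⟩, ?_, ?_⟩, ?_⟩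
      · rw [hk0, hk1]; exact hy.2 0 0 (by decide)
      · rw [hk0, hk2]; exact hy.2 0 1 (by decide)
      · rw [hk1, hk2]; exact hy.2 1 1 (by decide)
      · rw [hg]; exact hy
      · rw [hg]; exact fun hc => hnd ((deg4_iff hy).2 hc)
      · exact Subtype.ext hg
  rw [← Nat.card_eq_of_bijective F hbij, cardQ]
end
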